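/- arXiv:1805.01575 — 5 statements merged into one kernel-verified Lean document; each statement's English description precedes it below -/
import Mathlib

section
/- Let k, n ≥ 1 be integers and x00, x10, x01, x11 nonnegative integers summing to n, all strictly positive, and suppose ((x00+x10)/n)^{1/k} + ((x00+x01)/n)^{1/k} − (x00/n)^{1/k} < 1. Define p̂00 = (x00/n)^{1/k}, p̂10 = ((x00+x10)/n)^{1/k} − p̂00, p̂01 = ((x00+x01)/n)^{1/k} − p̂00, p̂11 = 1 − p̂00 − p̂10 − p̂01. Then (p̂10, p̂01, p̂11) has all entries strictly positive with sum strictly less than 1, and the corresponding θ̂ satisfies θ̂00 = x00/n, θ̂10 = x10/n, θ̂01 = x01/n, θ̂11 = x11/n. -/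
/-! The estimator is built so that each cumulative frequency is the `k`-th power of the matching
cumulative `p̂`: `p̂00 ^ k = x00/n`, `(p̂00 + p̂10) ^ k = (x00 + x10)/n`,
`(p̂00 + p̂01) ^ k = (x00 + x01)/n`, so the four cell identities are differences of these.
Positivity of `p̂10` and `p̂01` is strict monotonicity of `t ↦ t ^ (1/k)`, positivity of `p̂11`
is the defining inequality of `R_n`, and the sum of the three equals `1 - p̂00 < 1`. -/

namespace Real

variable {k : ℕ} {a b : ℝ}

lemma rpow_one_div_pow (hk : k ≠ 0) (ha : 0 ≤ a) : (a ^ ((1 : ℝ) / k)) ^ k = a := by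
  rw [one_div]
  exact rpow_inv_natCast_pow ha hk

lemma rpow_one_div_lt_rpow_one_div (hk : k ≠ 0) (ha : 0 ≤ a) (hab : a < b) :
    a ^ ((1 : ℝ) / k) < b ^ ((1 : ℝ) / k) :=
  rpow_lt_rpow ha hab (one_div_pos.2 (Nat.cast_pos.2 (Nat.pos_of_ne_zero hk)))

end Real

theorem stmt_5_general (k n : ℕ) (hk : 1 ≤ k)
    (x00 x10 x01 x11 : ℕ) (hsum : x00 + x10 + x01 + x11 = n)
    (h00 : 0 < x00) (h10 : 0 < x10) (h01 : 0 < x01)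
    (hR : (((x00 : ℝ) + x10) / n) ^ ((1 : ℝ) / k) + (((x00 : ℝ) + x01) / n) ^ ((1 : ℝ) / k)
        - ((x00 : ℝ) / n) ^ ((1 : ℝ) / k) < 1) :
    let p00 : ℝ := ((x00 : ℝ) / n) ^ ((1 : ℝ) / k)
    let p10 : ℝ := (((x00 : ℝ) + x10) / n) ^ ((1 : ℝ) / k) - p00
    let p01 : ℝ := (((x00 : ℝ) + x01) / n) ^ ((1 : ℝ) / k) - p00
    let p11 : ℝ := 1 - p00 - p10 - p01
    (0 < p10 ∧ 0 < p01 ∧ 0 < p11 ∧ p10 + p01 + p11 < 1) ∧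
    p00 ^ k = (x00 : ℝ) / n ∧
    (p00 + p10) ^ k - p00 ^ k = (x10 : ℝ) / n ∧
    (p00 + p01) ^ k - p00 ^ k = (x01 : ℝ) / n ∧
    1 - (p00 + p10) ^ k - (p00 + p01) ^ k + p00 ^ k = (x11 : ℝ) / n := by
  intro p00 p10 p01 p11
  have hk0 : k ≠ 0 := by omega
  have hn : (n : ℝ) = x00 + x10 + x01 + x11 := by exact_mod_cast hsum.symm
  have hn0 : (0 : ℝ) < n := by rw [hn]; positivity
  have e00 : p00 ^ k = x00 / n := Real.rpow_one_div_pow hk0 (by positivity)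
  have e10 : (p00 + p10) ^ k = (x00 + x10) / n := by
    simp only [p10, add_sub_cancel]
    exact Real.rpow_one_div_pow hk0 (by positivity)
  have e01 : (p00 + p01) ^ k = (x00 + x01) / n := by
    simp only [p01, add_sub_cancel]
    exact Real.rpow_one_div_pow hk0 (by positivity)
  have hp00 : 0 < p00 := Real.rpow_pos_of_pos (by positivity) _
  have hp10 : 0 < p10 := sub_pos.2 <| Real.rpow_one_div_lt_rpow_one_div hk0 (by positivity) <| by
    gcongr; exact lt_add_of_pos_right _ (by exact_mod_cast h10)
  have hp01 : 0 < p01 := sub_pos.2 <| Real.rpow_one_div_lt_rpow_one_div hk0 (by positivity) <| by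
    gcongr; exact lt_add_of_pos_right _ (by exact_mod_cast h01)
  have hp11 : 0 < p11 := by simp only [p11, p10, p01]; linarith
  refine ⟨⟨hp10, hp01, hp11, by simp only [p11]; linarith⟩, e00, ?_, ?_, ?_⟩
  · rw [e10, e00]; ring
  · rw [e01, e00]; ring
  · rw [e10, e01, e00]
    field_simp
    linarith

/-- the closed-form MLE lies in the parameter space and maps to the
empirical frequencies under the condition defining R_n. -/
theorem stmt_5 (k n : ℕ) (hk : 1 ≤ k) (hn : 1 ≤ n)
    (x00 x10 x01 x11 : ℕ) (hsum : x00 + x10 + x01 + x11 = n)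
    (h00 : 0 < x00) (h10 : 0 < x10) (h01 : 0 < x01) (h11 : 0 < x11)
    (hR : (((x00 : ℝ) + x10) / n) ^ ((1 : ℝ) / k) + (((x00 : ℝ) + x01) / n) ^ ((1 : ℝ) / k)
        - ((x00 : ℝ) / n) ^ ((1 : ℝ) / k) < 1) :
    let p00 : ℝ := ((x00 : ℝ) / n) ^ ((1 : ℝ) / k)
    let p10 : ℝ := (((x00 : ℝ) + x10) / n) ^ ((1 : ℝ) / k) - p00
    let p01 : ℝ := (((x00 : ℝ) + x01) / n) ^ ((1 : ℝ) / k) - p00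
    let p11 : ℝ := 1 - p00 - p10 - p01
    (0 < p10 ∧ 0 < p01 ∧ 0 < p11 ∧ p10 + p01 + p11 < 1) ∧
    p00 ^ k = (x00 : ℝ) / n ∧
    (p00 + p10) ^ k - p00 ^ k = (x10 : ℝ) / n ∧
    (p00 + p01) ^ k - p00 ^ k = (x01 : ℝ) / n ∧
    1 - (p00 + p10) ^ k - (p00 + p01) ^ k + p00 ^ k = (x11 : ℝ) / n :=
  stmt_5_general k n hk x00 x10 x01 x11 hsum h00 h10 h01 hR
end

section
/- Fix k ≥ 1 and suppose x11 = 0 and x00, x10, x01 are nonnegative reals. For any probability vector p = (p00, p10, p01, p11) with p11 > 0, there exists a probability vector p′ with p′11 = 0 such that ℓ(p′) ≥ ℓ(p), where ℓ(p) = x00·log(p00^k) + x10·log((p00+p10)^k − p00^k) + x01·log((p00+p01)^k − p00^k) (terms with zero count omitted; log of a nonpositive number treated as −∞). Specifically: if x10 > 0 take p′ = (p00, p10+p11, p01, 0); else if x01 > 0 take p′ = (p00, p10, p01+p11, 0); else take p′ = (p00+p11, p10, p01, 0). -/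
open scoped Classical

/-- A single term of the group-testing log-likelihood: terms with zero count are omitted,
and log of a nonpositive number is −∞. -/
noncomputable def glTerm (x a : ℝ) : EReal :=
  if x = 0 then 0 else if 0 < a then ((x * Real.log a : ℝ) : EReal) else ⊥

/-- Two-trait group testing log-likelihood with x11 = 0. -/
noncomputable def gtLL (k : ℕ) (x00 x10 x01 p00 p10 p01 : ℝ) : EReal :=
  glTerm x00 (p00 ^ k) + glTerm x10 ((p00 + p10) ^ k - p00 ^ k) +
    glTerm x01 ((p00 + p01) ^ k - p00 ^ k)

/-! Every term of `gtLL` is monotone in its argument, and each of `p00 + p10`, `p00 + p01`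
(and, when `x10 = x01 = 0`, `p00`) enters a single term, so adding `p11` to it can only
increase the likelihood. -/

@[simp]
lemma glTerm_zero_left (a : ℝ) : glTerm 0 a = 0 := by simp [glTerm]

lemma glTerm_mono {x : ℝ} (hx : 0 ≤ x) : Monotone (glTerm x) := by
  intro a b hab
  rcases hx.eq_or_lt with rfl | hx
  · simp
  by_cases ha : 0 < a
  · have hb : 0 < b := ha.trans_le hab
    simp only [glTerm, hx.ne', ha, hb, if_false, if_true]
    exact_mod_cast mul_le_mul_of_nonneg_left (Real.log_le_log ha hab) hx.le
  · simp [glTerm, hx.ne', ha]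

lemma pow_sub_pow_le_pow_sub_pow_add (k : ℕ) {a b t : ℝ} (hab : 0 ≤ a + b) (ht : 0 ≤ t) :
    (a + b) ^ k - a ^ k ≤ (a + (b + t)) ^ k - a ^ k :=
  sub_le_sub_right (pow_le_pow_left₀ hab (by linarith) k) _

section

variable (k : ℕ) {x00 x10 x01 : ℝ} (p00 p10 p01 : ℝ) {t : ℝ}

lemma gtLL_le_add_p10 (h10 : 0 ≤ x10) (hp : 0 ≤ p00 + p10) (ht : 0 ≤ t) :
    gtLL k x00 x10 x01 p00 p10 p01 ≤ gtLL k x00 x10 x01 p00 (p10 + t) p01 := by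
  unfold gtLL
  gcongr
  exact glTerm_mono h10 (pow_sub_pow_le_pow_sub_pow_add k hp ht)

lemma gtLL_le_add_p01 (h01 : 0 ≤ x01) (hp : 0 ≤ p00 + p01) (ht : 0 ≤ t) :
    gtLL k x00 x10 x01 p00 p10 p01 ≤ gtLL k x00 x10 x01 p00 p10 (p01 + t) := by
  unfold gtLL
  gcongr
  exact glTerm_mono h01 (pow_sub_pow_le_pow_sub_pow_add k hp ht)

lemma gtLL_le_add_p00 (h00 : 0 ≤ x00) (hp00 : 0 ≤ p00) (ht : 0 ≤ t) :
    gtLL k x00 0 0 p00 p10 p01 ≤ gtLL k x00 0 0 (p00 + t) p10 p01 := by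
  simp only [gtLL, glTerm_zero_left, add_zero]
  exact glTerm_mono h00 (pow_le_pow_left₀ hp00 (by linarith) k)

end

theorem stmt_8_general (k : ℕ) (x00 x10 x01 : ℝ)
    (h00 : 0 ≤ x00) (h10 : 0 ≤ x10) (h01 : 0 ≤ x01)
    (p00 p10 p01 p11 : ℝ)
    (hp00 : 0 ≤ p00) (hp10 : 0 ≤ p10) (hp01 : 0 ≤ p01) (hp11 : 0 < p11)
    (hpsum : p00 + p10 + p01 + p11 = 1) :
    ∃ q00 q10 q01 : ℝ,
      ((0 < x10 ∧ (q00, q10, q01) = (p00, p10 + p11, p01)) ∨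
       (x10 = 0 ∧ 0 < x01 ∧ (q00, q10, q01) = (p00, p10, p01 + p11)) ∨
       (x10 = 0 ∧ x01 = 0 ∧ (q00, q10, q01) = (p00 + p11, p10, p01))) ∧
      0 ≤ q00 ∧ 0 ≤ q10 ∧ 0 ≤ q01 ∧ q00 + q10 + q01 + 0 = 1 ∧
      gtLL k x00 x10 x01 p00 p10 p01 ≤ gtLL k x00 x10 x01 q00 q10 q01 := by
  rcases h10.lt_or_eq with hx10 | rfl
  · exact ⟨p00, p10 + p11, p01, Or.inl ⟨hx10, rfl⟩, hp00, by linarith, hp01, by linarith,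
      gtLL_le_add_p10 k p00 p10 p01 h10 (by linarith) hp11.le⟩
  rcases h01.lt_or_eq with hx01 | rfl
  · exact ⟨p00, p10, p01 + p11, Or.inr (Or.inl ⟨rfl, hx01, rfl⟩), hp00, hp10, by linarith,
      by linarith, gtLL_le_add_p01 k p00 p10 p01 h01 (by linarith) hp11.le⟩
  · exact ⟨p00 + p11, p10, p01, Or.inr (Or.inr ⟨rfl, rfl, rfl⟩), by linarith, hp10, hp01,
      by linarith, gtLL_le_add_p00 k p00 p10 p01 h00 hp00 hp11.le⟩

/-- when x11 = 0, moving the mass p11 into another coordinate as prescribed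
never decreases the likelihood, producing a probability vector with p′11 = 0. -/
theorem stmt_8 (k : ℕ) (hk : 1 ≤ k) (x00 x10 x01 : ℝ)
    (h00 : 0 ≤ x00) (h10 : 0 ≤ x10) (h01 : 0 ≤ x01)
    (p00 p10 p01 p11 : ℝ)
    (hp00 : 0 ≤ p00) (hp10 : 0 ≤ p10) (hp01 : 0 ≤ p01) (hp11 : 0 < p11)
    (hpsum : p00 + p10 + p01 + p11 = 1) :
    ∃ q00 q10 q01 : ℝ,
      ((0 < x10 ∧ (q00, q10, q01) = (p00, p10 + p11, p01)) ∨
       (x10 = 0 ∧ 0 < x01 ∧ (q00, q10, q01) = (p00, p10, p01 + p11)) ∨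
       (x10 = 0 ∧ x01 = 0 ∧ (q00, q10, q01) = (p00 + p11, p10, p01))) ∧
      0 ≤ q00 ∧ 0 ≤ q10 ∧ 0 ≤ q01 ∧ q00 + q10 + q01 + 0 = 1 ∧
      gtLL k x00 x10 x01 p00 p10 p01 ≤ gtLL k x00 x10 x01 q00 q10 q01 :=
  stmt_8_general k x00 x10 x01 h00 h10 h01 p00 p10 p01 p11 hp00 hp10 hp01 hp11 hpsum
end

section
/- Fix integer k ≥ 1 and strictly positive reals x00, x10, x01, x11. The reduced two-parameter log-likelihood ℓ*(p10, p01) = x00·log((1 − p10 − p01)^k) + x10·log((1 − p01)^k − (1 − p10 − p01)^k) + x01·log((1 − p10)^k − (1 − p10 − p01)^k) + x11·log(1 − (1 − p01)^k − (1 − p10)^k + (1 − p10 − p01)^k) is strictly concave on {(p10, p01) : p10, p01 > 0, p10 + p01 < 1, and all four log arguments positive}. -/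
/-!
Restrict to segments `t ↦ q + t • d`. Along a segment every log-argument is a polynomial `P` in
`t`, and `log P` is concave where `P'' P ≤ P' ^ 2`, strictly so where the inequality is strict.
Write `k = m + 2`; for `k ≤ 1` the domain is empty.

* `(1 - p₁₀ - p₀₁) ^ k` is a power of an affine function.
* For `u ^ k - v ^ k` with `0 < v < u` affine in `t`, `P' ^ 2 - P'' P` is a quadratic form in the
  direction `(u', v')`; completing the square leaves `(k - 1) (u v) ^ m (u ^ k - v ^ k) ^ 2 v' ^ 2`,
  so the form is positive definite and the two middle terms are strictly concave.
* For `F = 1 - (1 - b) ^ k - (1 - a) ^ k + γ ^ k` with `γ = 1 - a - b`, put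
  `P = (1 - a) ^ (k-1) - γ ^ (k-1)` and `Q = (1 - b) ^ (k-1) - γ ^ (k-1)`. The condition reduces
  (when the direction has components of equal sign) to `(m + 1) γ ^ m F ≤ (m + 2) P Q`. Since
  `F / k = ∫₀ᵃ ((1 - s) ^ (k-1) - (1 - b - s) ^ (k-1)) ds` and `Q / (k-1) = ∫₀ᵃ (1 - b - s) ^ m ds`,
  it follows by integrating `γ ^ m ((1 - s) ^ (k-1) - (1 - b - s) ^ (k-1)) ≤ P (1 - b - s) ^ m`,
  which compares geometric sums term by term using `γ (1 - s) ≤ (1 - a) (1 - b - s)` for `s ≤ a`.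
-/
open Real Set Finset

lemma StrictConcaveOn.const_mul {E : Type*} [AddCommGroup E] [Module ℝ E] {s : Set E}
    {f : E → ℝ} {c : ℝ} (hc : 0 < c) (hf : StrictConcaveOn ℝ s f) :
    StrictConcaveOn ℝ s fun x => c * f x := by
  refine ⟨hf.1, fun x hx y hy hxy a b ha hb hab => ?_⟩
  have := mul_lt_mul_of_pos_left (hf.2 hx hy hxy ha hb hab) hc
  simp only [smul_eq_mul] at this ⊢
  linarith

lemma strictConcaveOn_of_hasDerivAt2_neg {D : Set ℝ} (hD : Convex ℝ D) {f f' f'' : ℝ → ℝ}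
    (hf : ContinuousOn f D) (hf' : ∀ x ∈ interior D, HasDerivAt f (f' x) x)
    (hf'' : ∀ x ∈ interior D, HasDerivAt f' (f'' x) x) (hneg : ∀ x ∈ interior D, f'' x < 0) :
    StrictConcaveOn ℝ D f := by
  refine strictConcaveOn_of_deriv2_neg hD hf fun x hx => ?_
  have hderiv : deriv f =ᶠ[nhds x] f' :=
    Filter.eventually_of_mem (isOpen_interior.mem_nhds hx) fun y hy => (hf' y hy).deriv
  rw [Function.iterate_succ_apply, Function.iterate_one, hderiv.deriv_eq, (hf'' x hx).deriv]
  exact hneg x hx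

lemma hasDerivAt_log_deriv {P P' P'' : ℝ → ℝ} {x : ℝ} (hP : HasDerivAt P (P' x) x)
    (hP' : HasDerivAt P' (P'' x) x) (hx : P x ≠ 0) :
    HasDerivAt (fun y => P' y / P y) ((P'' x * P x - P' x ^ 2) / P x ^ 2) x :=
  (hP'.div hP hx).congr_deriv (by ring)

lemma concaveOn_log_of_hasDerivAt {D : Set ℝ} (hD : Convex ℝ D) {P P' P'' : ℝ → ℝ}
    (hP : ∀ x ∈ D, HasDerivAt P (P' x) x) (hP' : ∀ x ∈ interior D, HasDerivAt P' (P'' x) x)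
    (hpos : ∀ x ∈ D, 0 < P x) (h : ∀ x ∈ interior D, P'' x * P x ≤ P' x ^ 2) :
    ConcaveOn ℝ D fun x => log (P x) := by
  have hint : interior D ⊆ D := interior_subset
  refine concaveOn_of_hasDerivWithinAt2_nonpos hD
    (fun x hx => ((hP x hx).continuousAt.log (hpos x hx).ne').continuousWithinAt)
    (fun x hx => ((hP x (hint hx)).log (hpos x (hint hx)).ne').hasDerivWithinAt)
    (fun x hx => (hasDerivAt_log_deriv (hP x (hint hx)) (hP' x hx)
      (hpos x (hint hx)).ne').hasDerivWithinAt) fun x hx => ?_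
  exact div_nonpos_of_nonpos_of_nonneg (sub_nonpos.2 (h x hx)) (sq_nonneg _)

lemma strictConcaveOn_log_of_hasDerivAt {D : Set ℝ} (hD : Convex ℝ D) {P P' P'' : ℝ → ℝ}
    (hP : ∀ x ∈ D, HasDerivAt P (P' x) x) (hP' : ∀ x ∈ interior D, HasDerivAt P' (P'' x) x)
    (hpos : ∀ x ∈ D, 0 < P x) (h : ∀ x ∈ interior D, P'' x * P x < P' x ^ 2) :
    StrictConcaveOn ℝ D fun x => log (P x) := by
  have hint : interior D ⊆ D := interior_subset
  refine strictConcaveOn_of_hasDerivAt2_neg hD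
    (fun x hx => ((hP x hx).continuousAt.log (hpos x hx).ne').continuousWithinAt)
    (fun x hx => (hP x (hint hx)).log (hpos x (hint hx)).ne')
    (fun x hx => hasDerivAt_log_deriv (hP x (hint hx)) (hP' x hx) (hpos x (hint hx)).ne')
    fun x hx => ?_
  exact div_neg_of_neg_of_pos (sub_neg.2 (h x hx)) (pow_pos (hpos x (hint hx)) 2)

lemma strictConcaveOn_of_forall_line {E : Type*} [AddCommGroup E] [Module ℝ E] {s : Set E}
    {f : E → ℝ} (hs : Convex ℝ s)
    (h : ∀ x d, d ≠ 0 → (∀ t ∈ Icc (0 : ℝ) 1, x + t • d ∈ s) →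
      StrictConcaveOn ℝ (Icc (0 : ℝ) 1) fun t => f (x + t • d)) :
    StrictConcaveOn ℝ s f := by
  refine ⟨hs, fun x hx y hy hxy a b ha hb hab => ?_⟩
  have hseg : ∀ t ∈ Icc (0 : ℝ) 1, x + t • (y - x) ∈ s := fun t ht => by
    convert hs hx hy (sub_nonneg.2 ht.2) ht.1 (sub_add_cancel 1 t) using 1
    module
  have := (h x (y - x) (sub_ne_zero.2 hxy.symm) hseg).2 (left_mem_Icc.2 zero_le_one)
    (right_mem_Icc.2 zero_le_one) zero_ne_one ha hb hab
  obtain rfl : a = 1 - b := by linarith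
  simp only [zero_smul, add_zero, one_smul, add_sub_cancel, smul_eq_mul, mul_zero, mul_one,
    zero_add] at this
  simpa only [smul_eq_mul, show (1 - b) • x + b • y = x + b • (y - x) by module] using this

lemma HasDerivAt.pow_succ {ℓ : ℝ → ℝ} {c t : ℝ} (h : HasDerivAt ℓ c t) (n : ℕ) :
    HasDerivAt (fun s => ℓ s ^ (n + 1)) ((n + 1) * ℓ t ^ n * c) t := by
  simpa using h.fun_pow (n + 1)

lemma pow_mul_pow_succ_sub_pow_succ_le {g u v w : ℝ} (m : ℕ) (hg : 0 ≤ g) (hv : 0 ≤ v)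
    (hgu : 0 ≤ g * u) (hgu_le : g * u ≤ v * w) (hdiff : u - v = w - g) (hgw : 0 ≤ w - g) :
    g ^ m * (u ^ (m + 1) - v ^ (m + 1)) ≤ v ^ m * (w ^ (m + 1) - g ^ (m + 1)) := by
  rw [← geom_sum₂_mul, ← geom_sum₂_mul, hdiff, ← mul_assoc, ← mul_assoc]
  refine mul_le_mul_of_nonneg_right ?_ hgw
  rw [mul_sum, mul_sum]
  refine sum_le_sum fun i hi => ?_
  have hi : i ≤ m := Nat.lt_succ_iff.1 (mem_range.1 hi)
  have key : (g * u) ^ i * (g * v) ^ (m - i) ≤ (v * w) ^ i * (g * v) ^ (m - i) :=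
    mul_le_mul_of_nonneg_right (pow_le_pow_left₀ hgu hgu_le i) (by positivity)
  calc g ^ m * (u ^ i * v ^ (m + 1 - 1 - i))
      = (g * u) ^ i * (g * v) ^ (m - i) := by
        rw [Nat.add_sub_cancel, mul_pow, mul_pow, ← pow_sub_mul_pow g hi]; ring
    _ ≤ (v * w) ^ i * (g * v) ^ (m - i) := key
    _ = v ^ m * (w ^ i * g ^ (m + 1 - 1 - i)) := by
        rw [Nat.add_sub_cancel, mul_pow, mul_pow, ← pow_sub_mul_pow v hi]; ring

lemma integral_sub_pow (c a : ℝ) (n : ℕ) :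
    ∫ s in (0 : ℝ)..a, (c - s) ^ n = (c ^ (n + 1) - (c - a) ^ (n + 1)) / (n + 1) := by
  rw [intervalIntegral.integral_comp_sub_left (fun x => x ^ n) c, integral_pow, sub_zero]

lemma integral_pow_sub_pow_eq (m : ℕ) (a b : ℝ) :
    ∫ s in (0 : ℝ)..a, ((1 - s) ^ (m + 1) - (1 - b - s) ^ (m + 1)) =
      (1 - (1 - b) ^ (m + 2) - (1 - a) ^ (m + 2) + (1 - a - b) ^ (m + 2)) / (m + 2) := by
  rw [intervalIntegral.integral_sub ((by fun_prop : Continuous _).intervalIntegrable _ _)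
    ((by fun_prop : Continuous _).intervalIntegrable _ _), integral_sub_pow,
    integral_sub_pow]
  push_cast
  ring

lemma one_sub_pow_sub_pow_add_pow_pos (m : ℕ) {a b : ℝ} (ha : 0 < a) (hb : 0 < b)
    (hab : a + b < 1) :
    0 < 1 - (1 - b) ^ (m + 2) - (1 - a) ^ (m + 2) + (1 - a - b) ^ (m + 2) := by
  have hI : 0 < ∫ s in (0 : ℝ)..a, ((1 - s) ^ (m + 1) - (1 - b - s) ^ (m + 1)) :=
    intervalIntegral.intervalIntegral_pos_of_pos_on
      ((by fun_prop : Continuous _).intervalIntegrable _ _)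
      (fun s hs => sub_pos.2 (pow_lt_pow_left₀ (by linarith) (by linarith [hs.2]) (by omega))) ha
  rw [integral_pow_sub_pow_eq] at hI
  exact (div_pos_iff_of_pos_right (by positivity)).1 hI

lemma mul_one_sub_pow_sub_pow_add_pow_le (m : ℕ) {a b : ℝ} (ha : 0 < a) (hb : 0 < b)
    (hab : a + b < 1) :
    (m + 1) * (1 - a - b) ^ m * (1 - (1 - b) ^ (m + 2) - (1 - a) ^ (m + 2) + (1 - a - b) ^ (m + 2))
      ≤ (m + 2) * ((1 - a) ^ (m + 1) - (1 - a - b) ^ (m + 1)) *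
        ((1 - b) ^ (m + 1) - (1 - a - b) ^ (m + 1)) := by
  have hI := intervalIntegral.integral_mono_on (μ := MeasureTheory.volume) ha.le
    ((by fun_prop : Continuous fun s : ℝ =>
      (1 - a - b) ^ m * ((1 - s) ^ (m + 1) - (1 - b - s) ^ (m + 1))).intervalIntegrable _ _)
    ((by fun_prop : Continuous fun s : ℝ =>
      ((1 - a) ^ (m + 1) - (1 - a - b) ^ (m + 1)) * (1 - b - s) ^ m).intervalIntegrable _ _)
    fun s hs => by
      rw [mul_comm _ ((1 - b - s) ^ m)]
      exact pow_mul_pow_succ_sub_pow_succ_le m (by linarith) (by linarith [hs.2])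
        (by nlinarith [hs.2]) (by nlinarith [mul_nonneg hb.le (sub_nonneg.2 hs.2)]) (by ring)
        (by linarith)
  rw [intervalIntegral.integral_const_mul, intervalIntegral.integral_const_mul,
    integral_pow_sub_pow_eq, integral_sub_pow, show 1 - b - a = 1 - a - b by ring] at hI
  field_simp at hI
  linarith

lemma mul_one_sub_pow_sub_pow_add_pow_le_sq (m : ℕ) {a b : ℝ} (d₁ d₂ : ℝ) (ha : 0 < a)
    (hb : 0 < b) (hab : a + b < 1) :
    (m + 2) * (m + 1) * ((1 - a - b) ^ m * (d₁ + d₂) ^ 2 - (1 - a) ^ m * d₁ ^ 2 -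
        (1 - b) ^ m * d₂ ^ 2) *
      (1 - (1 - b) ^ (m + 2) - (1 - a) ^ (m + 2) + (1 - a - b) ^ (m + 2)) ≤
    ((m + 2) * (((1 - a) ^ (m + 1) - (1 - a - b) ^ (m + 1)) * d₁ +
      ((1 - b) ^ (m + 1) - (1 - a - b) ^ (m + 1)) * d₂)) ^ 2 := by
  have hF := one_sub_pow_sub_pow_add_pow_pos m ha hb hab
  have hmain := mul_one_sub_pow_sub_pow_add_pow_le m ha hb hab
  set F := 1 - (1 - b) ^ (m + 2) - (1 - a) ^ (m + 2) + (1 - a - b) ^ (m + 2)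
  set P := (1 - a) ^ (m + 1) - (1 - a - b) ^ (m + 1)
  set Q := (1 - b) ^ (m + 1) - (1 - a - b) ^ (m + 1)
  have hγ : 0 ≤ (1 - a - b) ^ m := pow_nonneg (by linarith) m
  have hα : (1 - a - b) ^ m ≤ (1 - a) ^ m := pow_le_pow_left₀ (by linarith) (by linarith) m
  have hβ : (1 - a - b) ^ m ≤ (1 - b) ^ m := pow_le_pow_left₀ (by linarith) (by linarith) m
  have hH : (1 - a - b) ^ m * (d₁ + d₂) ^ 2 - (1 - a) ^ m * d₁ ^ 2 - (1 - b) ^ m * d₂ ^ 2 ≤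
      2 * (1 - a - b) ^ m * (d₁ * d₂) := by
    nlinarith [mul_le_mul_of_nonneg_right hα (sq_nonneg d₁),
      mul_le_mul_of_nonneg_right hβ (sq_nonneg d₂)]
  have hγF : 0 ≤ (m + 1) * (1 - a - b) ^ m * F := by positivity
  calc _ ≤ (m + 2) * (m + 1) * (2 * (1 - a - b) ^ m * (d₁ * d₂)) * F :=
        mul_le_mul_of_nonneg_right (mul_le_mul_of_nonneg_left hH (by positivity)) hF.le
    _ = 2 * (m + 2) * (d₁ * d₂) * ((m + 1) * (1 - a - b) ^ m * F) := by ring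
    _ ≤ _ := by
        rcases le_or_gt (d₁ * d₂) 0 with hd | hd
        · exact (mul_nonpos_of_nonpos_of_nonneg (by nlinarith) hγF).trans (sq_nonneg _)
        · calc _ ≤ 2 * (m + 2) * (d₁ * d₂) * ((m + 2) * P * Q) :=
                mul_le_mul_of_nonneg_left hmain (by positivity)
            _ ≤ _ := by nlinarith [sq_nonneg ((m + 2) * (P * d₁ - Q * d₂))]

lemma mul_pow_sub_pow_lt_sq (m : ℕ) {u v du dv : ℝ} (hv : 0 < v) (hvu : v < u)
    (hd : du ≠ 0 ∨ dv ≠ 0) :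
    (m + 2) * (m + 1) * (u ^ m * du ^ 2 - v ^ m * dv ^ 2) * (u ^ (m + 2) - v ^ (m + 2)) <
      ((m + 2) * (u ^ (m + 1) * du - v ^ (m + 1) * dv)) ^ 2 := by
  have hu : 0 < u := hv.trans hvu
  have hf : 0 < u ^ (m + 2) - v ^ (m + 2) := sub_pos.2 (pow_lt_pow_left₀ hvu hv.le (by omega))
  set A := u ^ m * (u ^ (m + 2) + (m + 1) * v ^ (m + 2))
  have hA : 0 < A := by positivity
  -- completing the square in `(du, dv)`
  have hsq : A * (((m + 2) * (u ^ (m + 1) * du - v ^ (m + 1) * dv)) ^ 2 -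
      (m + 2) * (m + 1) * (u ^ m * du ^ 2 - v ^ m * dv ^ 2) * (u ^ (m + 2) - v ^ (m + 2))) =
      (m + 2) * ((A * du - (m + 2) * (u * v) ^ (m + 1) * dv) ^ 2 +
        (m + 1) * (u * v) ^ m * (u ^ (m + 2) - v ^ (m + 2)) ^ 2 * dv ^ 2) := by
    simp only [A]; ring
  have hpos : 0 < (A * du - (m + 2) * (u * v) ^ (m + 1) * dv) ^ 2 +
      (m + 1) * (u * v) ^ m * (u ^ (m + 2) - v ^ (m + 2)) ^ 2 * dv ^ 2 := by
    rcases eq_or_ne dv 0 with rfl | hdv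
    · have hdu : du ≠ 0 := hd.resolve_right (not_not.2 rfl)
      have : 0 < (A * du) ^ 2 := by positivity
      simpa using this
    · have : 0 < (m + 1) * (u * v) ^ m * (u ^ (m + 2) - v ^ (m + 2)) ^ 2 * dv ^ 2 := by
        positivity
      positivity
  rw [← sub_pos]
  exact pos_of_mul_pos_right (hsq ▸ (by positivity)) hA.le

lemma concaveOn_log_pow_of_hasDerivAt {D : Set ℝ} (hD : Convex ℝ D) (m : ℕ) {ℓ : ℝ → ℝ}
    {c : ℝ} (hℓ : ∀ t, HasDerivAt ℓ c t) (hpos : ∀ t ∈ D, 0 < ℓ t) :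
    ConcaveOn ℝ D fun t => log (ℓ t ^ (m + 2)) := by
  refine concaveOn_log_of_hasDerivAt hD (P' := fun t => (m + 2) * ℓ t ^ (m + 1) * c)
    (P'' := fun t => (m + 2) * ((m + 1) * ℓ t ^ m * c) * c)
    (fun t _ => ((hℓ t).pow_succ (m + 1)).congr_deriv (by push_cast; ring))
    (fun t _ => (((hℓ t).pow_succ m).const_mul ((m : ℝ) + 2)).mul_const c)
    (fun t ht => pow_pos (hpos t ht) _) fun t _ => ?_
  have : ((m + 2) * ℓ t ^ (m + 1) * c) ^ 2 - (m + 2) * ((m + 1) * ℓ t ^ m * c) * c * ℓ t ^ (m + 2)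
      = (m + 2) * (ℓ t ^ (m + 1) * c) ^ 2 := by ring
  exact sub_nonneg.1 (this ▸ by positivity)

lemma strictConcaveOn_log_pow_sub_pow_of_hasDerivAt {D : Set ℝ} (hD : Convex ℝ D) (m : ℕ)
    {u v : ℝ → ℝ} {du dv : ℝ} (hu : ∀ t, HasDerivAt u du t) (hv : ∀ t, HasDerivAt v dv t)
    (hd : du ≠ 0 ∨ dv ≠ 0) (huv : ∀ t ∈ D, 0 < v t ∧ v t < u t) :
    StrictConcaveOn ℝ D fun t => log (u t ^ (m + 2) - v t ^ (m + 2)) :=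
  strictConcaveOn_log_of_hasDerivAt hD
    (P' := fun t => (m + 2) * (u t ^ (m + 1) * du - v t ^ (m + 1) * dv))
    (P'' := fun t => (m + 2) * (m + 1) * (u t ^ m * du ^ 2 - v t ^ m * dv ^ 2))
    (fun t _ => (((hu t).pow_succ (m + 1)).sub ((hv t).pow_succ (m + 1))).congr_deriv
      (by push_cast; ring))
    (fun t _ => (((((hu t).pow_succ m).mul_const du).sub
      (((hv t).pow_succ m).mul_const dv)).const_mul ((m : ℝ) + 2)).congr_deriv (by ring))
    (fun t ht => sub_pos.2 (pow_lt_pow_left₀ (huv t ht).2 (huv t ht).1.le (by omega)))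
    fun t ht => mul_pow_sub_pow_lt_sq m (huv t (interior_subset ht)).1
      (huv t (interior_subset ht)).2 hd

def openTriangle : Set (ℝ × ℝ) := {q | 0 < q.1 ∧ 0 < q.2 ∧ q.1 + q.2 < 1}

lemma convex_openTriangle : Convex ℝ openTriangle := by
  rintro x ⟨hx₁, hx₂, hx₃⟩ y ⟨hy₁, hy₂, hy₃⟩ a b ha hb hab
  refine ⟨convex_Ioi (0 : ℝ) hx₁ hy₁ ha hb hab, convex_Ioi (0 : ℝ) hx₂ hy₂ ha hb hab, ?_⟩
  have := convex_Iio (1 : ℝ) hx₃ hy₃ ha hb hab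
  simp only [Set.mem_Iio, smul_eq_mul, Prod.fst_add, Prod.snd_add, Prod.smul_fst,
    Prod.smul_snd] at this ⊢
  linarith

lemma concaveOn_log_one_sub_pow_sub_pow_add_pow_of_hasDerivAt {D : Set ℝ} (hD : Convex ℝ D)
    (m : ℕ) {a b : ℝ → ℝ} {d₁ d₂ : ℝ} (ha : ∀ t, HasDerivAt a d₁ t)
    (hb : ∀ t, HasDerivAt b d₂ t) (hab : ∀ t ∈ D, (a t, b t) ∈ openTriangle) :
    ConcaveOn ℝ D fun t =>
      log (1 - (1 - b t) ^ (m + 2) - (1 - a t) ^ (m + 2) + (1 - a t - b t) ^ (m + 2)) := by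
  have hα t : HasDerivAt (fun s => 1 - a s) (-d₁) t := (ha t).const_sub 1
  have hβ t : HasDerivAt (fun s => 1 - b s) (-d₂) t := (hb t).const_sub 1
  have hγ t : HasDerivAt (fun s => 1 - a s - b s) (-d₁ - d₂) t := (hα t).sub (hb t)
  refine concaveOn_log_of_hasDerivAt hD
    (P' := fun t => (m + 2) * (((1 - a t) ^ (m + 1) - (1 - a t - b t) ^ (m + 1)) * d₁ +
      ((1 - b t) ^ (m + 1) - (1 - a t - b t) ^ (m + 1)) * d₂))
    (P'' := fun t => (m + 2) * (m + 1) * ((1 - a t - b t) ^ m * (d₁ + d₂) ^ 2 -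
      (1 - a t) ^ m * d₁ ^ 2 - (1 - b t) ^ m * d₂ ^ 2))
    (fun t _ => (((((hβ t).pow_succ (m + 1)).const_sub 1).sub ((hα t).pow_succ (m + 1))).add
      ((hγ t).pow_succ (m + 1))).congr_deriv (by push_cast; ring))
    (fun t _ => (((((hα t).pow_succ m).sub ((hγ t).pow_succ m)).mul_const d₁).add
      ((((hβ t).pow_succ m).sub ((hγ t).pow_succ m)).mul_const d₂)).const_mul
      ((m : ℝ) + 2) |>.congr_deriv (by ring))
    (fun t ht => one_sub_pow_sub_pow_add_pow_pos m (hab t ht).1 (hab t ht).2.1 (hab t ht).2.2)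
    fun t ht => ?_
  obtain ⟨h₁, h₂, h₃⟩ := hab t (interior_subset ht)
  exact mul_one_sub_pow_sub_pow_add_pow_le_sq m d₁ d₂ h₁ h₂ h₃

noncomputable def reducedLogLik (k : ℕ) (x₀₀ x₁₀ x₀₁ x₁₁ p₁₀ p₀₁ : ℝ) : ℝ :=
  x₀₀ * log ((1 - p₁₀ - p₀₁) ^ k) +
  x₁₀ * log ((1 - p₀₁) ^ k - (1 - p₁₀ - p₀₁) ^ k) +
  x₀₁ * log ((1 - p₁₀) ^ k - (1 - p₁₀ - p₀₁) ^ k) +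
  x₁₁ * log (1 - (1 - p₀₁) ^ k - (1 - p₁₀) ^ k + (1 - p₁₀ - p₀₁) ^ k)

def reducedLogLikDomain (k : ℕ) : Set (ℝ × ℝ) :=
  {q | 0 < q.1 ∧ 0 < q.2 ∧ q.1 + q.2 < 1 ∧
    0 < (1 - q.1 - q.2) ^ k ∧
    0 < (1 - q.2) ^ k - (1 - q.1 - q.2) ^ k ∧
    0 < (1 - q.1) ^ k - (1 - q.1 - q.2) ^ k ∧
    0 < 1 - (1 - q.2) ^ k - (1 - q.1) ^ k + (1 - q.1 - q.2) ^ k}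

lemma reducedLogLikDomain_eq_empty {k : ℕ} (hk : k < 2) : reducedLogLikDomain k = ∅ := by
  refine eq_empty_of_forall_notMem fun q ⟨_, _, _, _, h₁, _, h₂⟩ => ?_
  interval_cases k <;> simp only [pow_zero, pow_one] at h₁ h₂ <;> linarith

lemma reducedLogLikDomain_eq_openTriangle (m : ℕ) :
    reducedLogLikDomain (m + 2) = openTriangle := by
  ext q
  refine ⟨fun h => ⟨h.1, h.2.1, h.2.2.1⟩, fun ⟨h₁, h₂, h₃⟩ => ⟨h₁, h₂, h₃, ?_, ?_, ?_,
    one_sub_pow_sub_pow_add_pow_pos m h₁ h₂ h₃⟩⟩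
  · exact pow_pos (by linarith) _
  · exact sub_pos.2 (pow_lt_pow_left₀ (by linarith) (by linarith) (by omega))
  · exact sub_pos.2 (pow_lt_pow_left₀ (by linarith) (by linarith) (by omega))

lemma strictConcaveOn_reducedLogLik_comp {D : Set ℝ} (hD : Convex ℝ D) (m : ℕ)
    {x₀₀ x₁₀ x₀₁ x₁₁ : ℝ} (h₀₀ : 0 ≤ x₀₀) (h₁₀ : 0 < x₁₀) (h₀₁ : 0 ≤ x₀₁) (h₁₁ : 0 ≤ x₁₁)
    {a b : ℝ → ℝ} {d₁ d₂ : ℝ} (ha : ∀ t, HasDerivAt a d₁ t) (hb : ∀ t, HasDerivAt b d₂ t)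
    (hd : d₁ ≠ 0 ∨ d₂ ≠ 0) (hab : ∀ t ∈ D, (a t, b t) ∈ openTriangle) :
    StrictConcaveOn ℝ D fun t => reducedLogLik (m + 2) x₀₀ x₁₀ x₀₁ x₁₁ (a t) (b t) := by
  have hα t : HasDerivAt (fun s => 1 - a s) (-d₁) t := (ha t).const_sub 1
  have hβ t : HasDerivAt (fun s => 1 - b s) (-d₂) t := (hb t).const_sub 1
  have hγ t : HasDerivAt (fun s => 1 - a s - b s) (-d₁ - d₂) t := (hα t).sub (hb t)
  have hd₁ : -d₂ ≠ 0 ∨ -d₁ - d₂ ≠ 0 := by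
    contrapose! hd
    exact ⟨by linarith [hd.1, hd.2], by linarith [hd.1]⟩
  have hd₂ : -d₁ ≠ 0 ∨ -d₁ - d₂ ≠ 0 := by
    contrapose! hd
    exact ⟨by linarith [hd.1], by linarith [hd.1, hd.2]⟩
  have T₀₀ := (concaveOn_log_pow_of_hasDerivAt hD m hγ fun t ht => by
    obtain ⟨h₁, h₂, h₃⟩ := hab t ht; linarith).smul h₀₀
  have T₁₀ := (strictConcaveOn_log_pow_sub_pow_of_hasDerivAt hD m hβ hγ hd₁ fun t ht => by
    obtain ⟨h₁, h₂, h₃⟩ := hab t ht; constructor <;> linarith).const_mul h₁₀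
  have T₀₁ := (strictConcaveOn_log_pow_sub_pow_of_hasDerivAt hD m hα hγ hd₂ fun t ht => by
    obtain ⟨h₁, h₂, h₃⟩ := hab t ht; constructor <;> linarith).concaveOn.smul h₀₁
  have T₁₁ := (concaveOn_log_one_sub_pow_sub_pow_add_pow_of_hasDerivAt hD m ha hb hab).smul h₁₁
  exact ((T₀₀.add_strictConcaveOn T₁₀).add_concaveOn T₀₁).add_concaveOn T₁₁

theorem stmt_10_general (k : ℕ) (x00 x10 x01 x11 : ℝ)
    (h00 : 0 < x00) (h10 : 0 < x10) (h01 : 0 < x01) (h11 : 0 < x11) :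
    StrictConcaveOn ℝ
      {q : ℝ × ℝ | 0 < q.1 ∧ 0 < q.2 ∧ q.1 + q.2 < 1 ∧
        0 < (1 - q.1 - q.2) ^ k ∧
        0 < (1 - q.2) ^ k - (1 - q.1 - q.2) ^ k ∧
        0 < (1 - q.1) ^ k - (1 - q.1 - q.2) ^ k ∧
        0 < 1 - (1 - q.2) ^ k - (1 - q.1) ^ k + (1 - q.1 - q.2) ^ k}
      (fun q : ℝ × ℝ =>
        x00 * Real.log ((1 - q.1 - q.2) ^ k) +
        x10 * Real.log ((1 - q.2) ^ k - (1 - q.1 - q.2) ^ k) +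
        x01 * Real.log ((1 - q.1) ^ k - (1 - q.1 - q.2) ^ k) +
        x11 * Real.log (1 - (1 - q.2) ^ k - (1 - q.1) ^ k + (1 - q.1 - q.2) ^ k)) := by
  show StrictConcaveOn ℝ (reducedLogLikDomain k) fun q => reducedLogLik k x00 x10 x01 x11 q.1 q.2
  obtain hk | ⟨m, rfl⟩ : k < 2 ∨ ∃ m, k = m + 2 := by
    rcases k with _ | _ | m <;> simp
  · rw [reducedLogLikDomain_eq_empty hk]
    exact ⟨convex_empty, fun x hx => hx.elim⟩
  rw [reducedLogLikDomain_eq_openTriangle]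
  refine strictConcaveOn_of_forall_line convex_openTriangle fun x d hd hmem => ?_
  refine strictConcaveOn_reducedLogLik_comp (convex_Icc 0 1) m h00.le h10 h01.le h11.le
    (a := fun t => x.1 + t * d.1) (b := fun t => x.2 + t * d.2)
    (fun _ => (hasDerivAt_mul_const d.1).const_add x.1)
    (fun _ => (hasDerivAt_mul_const d.2).const_add x.2) ?_ hmem
  contrapose! hd
  exact Prod.ext hd.1 hd.2

/-- strict concavity of the reduced two-parameter log-likelihood
(p11 = 0, p00 = 1 − p10 − p01), with q.1 = p10 and q.2 = p01. -/
theorem stmt_10 (k : ℕ) (hk : 1 ≤ k) (x00 x10 x01 x11 : ℝ)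
    (h00 : 0 < x00) (h10 : 0 < x10) (h01 : 0 < x01) (h11 : 0 < x11) :
    StrictConcaveOn ℝ
      {q : ℝ × ℝ | 0 < q.1 ∧ 0 < q.2 ∧ q.1 + q.2 < 1 ∧
        0 < (1 - q.1 - q.2) ^ k ∧
        0 < (1 - q.2) ^ k - (1 - q.1 - q.2) ^ k ∧
        0 < (1 - q.1) ^ k - (1 - q.1 - q.2) ^ k ∧
        0 < 1 - (1 - q.2) ^ k - (1 - q.1) ^ k + (1 - q.1 - q.2) ^ k}
      (fun q : ℝ × ℝ =>
        x00 * Real.log ((1 - q.1 - q.2) ^ k) +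
        x10 * Real.log ((1 - q.2) ^ k - (1 - q.1 - q.2) ^ k) +
        x01 * Real.log ((1 - q.1) ^ k - (1 - q.1 - q.2) ^ k) +
        x11 * Real.log (1 - (1 - q.2) ^ k - (1 - q.1) ^ k + (1 - q.1 - q.2) ^ k)) :=
  stmt_10_general k x00 x10 x01 x11 h00 h10 h01 h11
end

section
/- Let x = (x00, x10, x01, x11) be multinomial(n, θ) with θ the pooled-model probabilities arising from p with all components positive, and let g(x) = ((x00+x10)/n)^{1/k} + ((x00+x01)/n)^{1/k} − (x00/n)^{1/k}. Then g(x) converges almost surely as n → ∞ to p00 + p10 + p01 < 1, and hence P(x ∈ R_n) → 1, where R_n = {x : g(x) < 1}. -/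
open MeasureTheory ProbabilityTheory Filter Topology Finset

/-!
By the strong law of large numbers the three empirical means converge almost surely to
`p00 ^ k`, `(p00 + p10) ^ k` and `(p00 + p01) ^ k`, so by continuity of `x ↦ x ^ (1 / k)` on
`[0, ∞)` the statistic `g` converges almost surely to `(p00 + p10) + (p00 + p01) - p00`, which
is `1 - p11 < 1`. Almost sure convergence implies convergence in measure, so the probability
that `g` stays below the strict upper bound `1` of its limit tends to `1`.
-/

theorem ae_tendsto_mean_rpow_one_div {Ω : Type*} [MeasurableSpace Ω] {μ : Measure Ω}
    {X : ℕ → Ω → ℝ} {k : ℕ} {m : ℝ} (hk : k ≠ 0) (hm : 0 ≤ m) (hint : Integrable (X 0) μ)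
    (hindep : Pairwise fun i j => IndepFun (X i) (X j) μ)
    (hident : ∀ i, IdentDistrib (X i) (X 0) μ μ) (hmean : ∫ ω, X 0 ω ∂μ = m ^ k) :
    ∀ᵐ ω ∂μ, Tendsto (fun n : ℕ => ((∑ i ∈ range n, X i ω) / n) ^ ((1 : ℝ) / k)) atTop
      (𝓝 m) := by
  filter_upwards [strong_law_ae_real X hint hindep hident] with ω hω
  rw [hmean] at hω
  simpa [one_div, Real.pow_rpow_inv_natCast hm hk] using
    hω.rpow_const (p := 1 / k) (Or.inr (by positivity))

theorem tendsto_measure_lt_of_ae_tendsto {Ω : Type*} [MeasurableSpace Ω] {μ : Measure Ω}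
    [IsProbabilityMeasure μ] {f : ℕ → Ω → ℝ} {c a : ℝ} (hf : ∀ n, AEMeasurable (f n) μ)
    (hlim : ∀ᵐ ω ∂μ, Tendsto (fun n => f n ω) atTop (𝓝 c)) (hca : c < a) :
    Tendsto (fun n => μ {ω | f n ω < a}) atTop (𝓝 1) := by
  have hfar : Tendsto (fun n => μ {ω | a - c ≤ dist (f n ω) c}) atTop (𝓝 0) :=
    tendstoInMeasure_iff_dist.mp
      (tendstoInMeasure_of_tendsto_ae (fun n => (hf n).aestronglyMeasurable) hlim) _
      (sub_pos.mpr hca)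
  have hge : Tendsto (fun n => μ {ω | a ≤ f n ω}) atTop (𝓝 0) := by
    refine tendsto_of_tendsto_of_tendsto_of_le_of_le tendsto_const_nhds hfar
      (fun _ => zero_le) (fun n => measure_mono fun ω (hω : a ≤ f n ω) => ?_)
    change a - c ≤ dist (f n ω) c
    rw [Real.dist_eq, abs_of_nonneg (by linarith)]
    linarith
  have hcompl : ∀ n, μ {ω | f n ω < a} = 1 - μ {ω | a ≤ f n ω} := fun n => by
    rw [← prob_compl_eq_one_sub₀ (nullMeasurableSet_le aemeasurable_const (hf n))]
    simp only [Set.compl_ofPred, not_le]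
  simpa [hcompl] using ENNReal.Tendsto.sub tendsto_const_nhds hge (Or.inl ENNReal.one_ne_top)

theorem stmt_15_general {Ω : Type*} [MeasurableSpace Ω] (μ : Measure Ω) [IsProbabilityMeasure μ]
    (k : ℕ) (hk : 1 ≤ k)
    (p00 p10 p01 p11 : ℝ)
    (h00 : 0 < p00) (h10 : 0 < p10) (h01 : 0 < p01) (h11 : 0 < p11)
    (hsum : p00 + p10 + p01 + p11 = 1)
    (A B C : ℕ → Ω → ℝ)
    (hindA : Pairwise fun i j => IndepFun (A i) (A j) μ)
    (hindB : Pairwise fun i j => IndepFun (B i) (B j) μ)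
    (hindC : Pairwise fun i j => IndepFun (C i) (C j) μ)
    (hidA : ∀ i, IdentDistrib (A i) (A 0) μ μ)
    (hidB : ∀ i, IdentDistrib (B i) (B 0) μ μ)
    (hidC : ∀ i, IdentDistrib (C i) (C 0) μ μ)
    (hiA : Integrable (A 0) μ) (hiB : Integrable (B 0) μ) (hiC : Integrable (C 0) μ)
    (hEA : ∫ ω, A 0 ω ∂μ = p00 ^ k)
    (hEB : ∫ ω, B 0 ω ∂μ = (p00 + p10) ^ k)
    (hEC : ∫ ω, C 0 ω ∂μ = (p00 + p01) ^ k) :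
    (∀ᵐ ω ∂μ, Tendsto (fun n : ℕ =>
        ((∑ i ∈ Finset.range n, B i ω) / n) ^ ((1 : ℝ) / k) +
        ((∑ i ∈ Finset.range n, C i ω) / n) ^ ((1 : ℝ) / k) -
        ((∑ i ∈ Finset.range n, A i ω) / n) ^ ((1 : ℝ) / k)) atTop
        (nhds (p00 + p10 + p01))) ∧
    p00 + p10 + p01 < 1 ∧
    Tendsto (fun n : ℕ => μ {ω |
        ((∑ i ∈ Finset.range n, B i ω) / n) ^ ((1 : ℝ) / k) +
        ((∑ i ∈ Finset.range n, C i ω) / n) ^ ((1 : ℝ) / k) -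
        ((∑ i ∈ Finset.range n, A i ω) / n) ^ ((1 : ℝ) / k) < 1}) atTop (nhds 1) := by
  have hk0 : k ≠ 0 := by omega
  have hlt : p00 + p10 + p01 < 1 := by linarith
  have hA := ae_tendsto_mean_rpow_one_div hk0 h00.le hiA hindA hidA hEA
  have hB := ae_tendsto_mean_rpow_one_div hk0 (by positivity) hiB hindB hidB hEB
  have hC := ae_tendsto_mean_rpow_one_div hk0 (by positivity) hiC hindC hidC hEC
  have hlim : ∀ᵐ ω ∂μ, Tendsto (fun n : ℕ =>
      ((∑ i ∈ range n, B i ω) / n) ^ ((1 : ℝ) / k) +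
      ((∑ i ∈ range n, C i ω) / n) ^ ((1 : ℝ) / k) -
      ((∑ i ∈ range n, A i ω) / n) ^ ((1 : ℝ) / k)) atTop (𝓝 (p00 + p10 + p01)) := by
    filter_upwards [hA, hB, hC] with ω hAω hBω hCω
    convert (hBω.add hCω).sub hAω using 2
    ring
  have hmeas : ∀ n, AEMeasurable (fun ω =>
      ((∑ i ∈ range n, B i ω) / n) ^ ((1 : ℝ) / k) +
      ((∑ i ∈ range n, C i ω) / n) ^ ((1 : ℝ) / k) -
      ((∑ i ∈ range n, A i ω) / n) ^ ((1 : ℝ) / k)) μ := fun n => by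
    have := fun i => (hidA i).aemeasurable_fst
    have := fun i => (hidB i).aemeasurable_fst
    have := fun i => (hidC i).aemeasurable_fst
    fun_prop
  exact ⟨hlim, hlt, tendsto_measure_lt_of_ae_tendsto hmeas hlim hlt⟩

/-- strong-law convergence of g(x) to p00 + p10 + p01 < 1, and hence
P(x ∈ R_n) → 1. Here `A i`, `B i`, `C i` are the (iid) indicators contributing to the
cumulative counts x00, x00 + x10, x00 + x01 for the i-th pool, with means
θ00 = p00^k, θ00 + θ10 = (p00+p10)^k, θ00 + θ01 = (p00+p01)^k. -/
theorem stmt_15 {Ω : Type*} [MeasurableSpace Ω] (μ : Measure Ω) [IsProbabilityMeasure μ]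
    (k : ℕ) (hk : 1 ≤ k)
    (p00 p10 p01 p11 : ℝ)
    (h00 : 0 < p00) (h10 : 0 < p10) (h01 : 0 < p01) (h11 : 0 < p11)
    (hsum : p00 + p10 + p01 + p11 = 1)
    (A B C : ℕ → Ω → ℝ)
    (hmA : ∀ i, Measurable (A i)) (hmB : ∀ i, Measurable (B i)) (hmC : ∀ i, Measurable (C i))
    (hindA : Pairwise fun i j => IndepFun (A i) (A j) μ)
    (hindB : Pairwise fun i j => IndepFun (B i) (B j) μ)
    (hindC : Pairwise fun i j => IndepFun (C i) (C j) μ)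
    (hidA : ∀ i, IdentDistrib (A i) (A 0) μ μ)
    (hidB : ∀ i, IdentDistrib (B i) (B 0) μ μ)
    (hidC : ∀ i, IdentDistrib (C i) (C 0) μ μ)
    (hiA : Integrable (A 0) μ) (hiB : Integrable (B 0) μ) (hiC : Integrable (C 0) μ)
    (hEA : ∫ ω, A 0 ω ∂μ = p00 ^ k)
    (hEB : ∫ ω, B 0 ω ∂μ = (p00 + p10) ^ k)
    (hEC : ∫ ω, C 0 ω ∂μ = (p00 + p01) ^ k) :
    (∀ᵐ ω ∂μ, Tendsto (fun n : ℕ =>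
        ((∑ i ∈ Finset.range n, B i ω) / n) ^ ((1 : ℝ) / k) +
        ((∑ i ∈ Finset.range n, C i ω) / n) ^ ((1 : ℝ) / k) -
        ((∑ i ∈ Finset.range n, A i ω) / n) ^ ((1 : ℝ) / k)) atTop
        (nhds (p00 + p10 + p01))) ∧
    p00 + p10 + p01 < 1 ∧
    Tendsto (fun n : ℕ => μ {ω |
        ((∑ i ∈ Finset.range n, B i ω) / n) ^ ((1 : ℝ) / k) +
        ((∑ i ∈ Finset.range n, C i ω) / n) ^ ((1 : ℝ) / k) -
        ((∑ i ∈ Finset.range n, A i ω) / n) ^ ((1 : ℝ) / k) < 1}) atTop (nhds 1) :=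
  stmt_15_general μ k hk p00 p10 p01 p11 h00 h10 h01 h11 hsum A B C hindA hindB hindC hidA hidB hidC
    hiA hiB hiC hEA hEB hEC
end

section
/- Define p̂^RMM by p̂11 = max{0, 1 − ((x00+x10)/n)^{1/k} − ((x00+x01)/n)^{1/k} + (x00/n)^{1/k}}, p̂10 = 1 − ((x00+x01)/n)^{1/k} − p̂11, p̂01 = 1 − ((x00+x10)/n)^{1/k} − p̂11, p̂00 = 1 − p̂10 − p̂01 − p̂11, for nonnegative integers x00, x10, x01, x11 summing to n ≥ 1 and integer k ≥ 1. Then all four components of p̂^RMM are nonnegative and sum to 1. -/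
/-- With `c ≤ a, b ≤ 1` the truncation at `0` is exactly what keeps `p10` and `p01` nonnegative:
if it is inactive then `p10 = a - c` and `p01 = b - c`, and if it is active then `p00 = a + b - 1 ≥ c`. -/
theorem rmm_estimator_isProbVec {a b c : ℝ} (hc : 0 ≤ c) (hca : c ≤ a) (hcb : c ≤ b)
    (ha : a ≤ 1) (hb : b ≤ 1) :
    let p11 := max 0 (1 - a - b + c)
    let p10 := 1 - b - p11
    let p01 := 1 - a - p11
    let p00 := 1 - p10 - p01 - p11
    0 ≤ p00 ∧ 0 ≤ p10 ∧ 0 ≤ p01 ∧ 0 ≤ p11 ∧ p00 + p10 + p01 + p11 = 1 := by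
  intro p11 p10 p01 p00
  refine ⟨?_, ?_, ?_, le_max_left _ _, by ring⟩ <;>
  · simp only [p00, p10, p01, p11]
    rcases le_total (1 - a - b + c) 0 with h | h
    · rw [max_eq_left h]; linarith
    · rw [max_eq_right h]; linarith

theorem stmt_19_general (k n : ℕ)
    (x00 x10 x01 x11 : ℕ) (hsum : x00 + x10 + x01 + x11 = n) :
    let a : ℝ := (((x00 : ℝ) + x10) / n) ^ ((1 : ℝ) / k)
    let b : ℝ := (((x00 : ℝ) + x01) / n) ^ ((1 : ℝ) / k)
    let c : ℝ := ((x00 : ℝ) / n) ^ ((1 : ℝ) / k)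
    let p11 := max 0 (1 - a - b + c)
    let p10 := 1 - b - p11
    let p01 := 1 - a - p11
    let p00 := 1 - p10 - p01 - p11
    0 ≤ p00 ∧ 0 ≤ p10 ∧ 0 ≤ p01 ∧ 0 ≤ p11 ∧ p00 + p10 + p01 + p11 = 1 := by
  intro a b c
  have hs : (0 : ℝ) ≤ 1 / k := by positivity
  have hsum' : (x00 : ℝ) + x10 + x01 + x11 = n := by exact_mod_cast hsum
  have h10 : (0 : ℝ) ≤ x10 := x10.cast_nonneg
  have h01 : (0 : ℝ) ≤ x01 := x01.cast_nonneg
  have h11 : (0 : ℝ) ≤ x11 := x11.cast_nonneg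
  have hca : c ≤ a := Real.rpow_le_rpow (by positivity) (by gcongr; linarith) hs
  have hcb : c ≤ b := Real.rpow_le_rpow (by positivity) (by gcongr; linarith) hs
  have ha : a ≤ 1 := Real.rpow_le_one (by positivity)
    (div_le_one_of_le₀ (by linarith) n.cast_nonneg) hs
  have hb : b ≤ 1 := Real.rpow_le_one (by positivity)
    (div_le_one_of_le₀ (by linarith) n.cast_nonneg) hs
  exact rmm_estimator_isProbVec (by positivity) hca hcb ha hb

/-- the restricted method of moments estimator is a probability vector. -/
theorem stmt_19 (k n : ℕ) (hk : 1 ≤ k) (hn : 1 ≤ n)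
    (x00 x10 x01 x11 : ℕ) (hsum : x00 + x10 + x01 + x11 = n) :
    let a : ℝ := (((x00 : ℝ) + x10) / n) ^ ((1 : ℝ) / k)
    let b : ℝ := (((x00 : ℝ) + x01) / n) ^ ((1 : ℝ) / k)
    let c : ℝ := ((x00 : ℝ) / n) ^ ((1 : ℝ) / k)
    let p11 := max 0 (1 - a - b + c)
    let p10 := 1 - b - p11
    let p01 := 1 - a - p11
    let p00 := 1 - p10 - p01 - p11
    0 ≤ p00 ∧ 0 ≤ p10 ∧ 0 ≤ p01 ∧ 0 ≤ p11 ∧ p00 + p10 + p01 + p11 = 1 :=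
  stmt_19_general k n x00 x10 x01 x11 hsum
end
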